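/- Let R be a ring and J an injective cogenerator of Mod R. For every right R-module M there exists an index set ι such that, setting J' := J^ι (the ι-indexed product) and E' := End_R(J')^op, the evaluation map ε_M : M → Hom_{E'}(Hom_R(M, J'), J') is an isomorphism. -/

import Mathlib

/-!
Let `P` be injective and `u : M → P` an embedding whose image is the common kernel of the
endomorphisms `g` of `P` with `g ∘ u = 0`. An `End(P)`-linear `φ : Hom(M, P) → P` commutes with
every endomorphism, so `φ u` is killed by each such `g` and equals `u m` for some `m`; as `P` is
injective, every `f : M → P` factors as `h ∘ u`, whence `φ f = h (φ u) = h (u m) = f m`.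
For an injective cogenerator `J`, `P = J ^ Hom(M, J)` with the canonical embedding qualifies:
a point outside `u(M)` is detected by a map `P ⧸ u(M) → J`, which, precomposed with the quotient
map and placed in every coordinate, is an endomorphism of `P`.
-/

universe u

/-- The evaluation map `ε_M(m) : Hom_R(M,J') → J'`, `f ↦ f m`, as a homomorphism of
left `E' = End_R(J')ᵒᵖ`-modules. -/
def evalAt {R : Type*} [Ring R] {J : Type*} [AddCommGroup J] [Module Rᵐᵒᵖ J]
    {M : Type*} [AddCommGroup M] [Module Rᵐᵒᵖ M] (m : M) :
    (M →ₗ[Rᵐᵒᵖ] J) →ₗ[Module.End Rᵐᵒᵖ J] J where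
  toFun f := f m
  map_add' _ _ := rfl
  map_smul' _ _ := rfl

def IsCogenerator (S : Type*) [Ring S] (J : Type u) [AddCommGroup J] [Module S J] : Prop :=
  ∀ (N : Type u) [AddCommGroup N] [Module S N], (∀ f : N →ₗ[S] J, f = 0) → Subsingleton N

namespace IsCogenerator

variable {S : Type u} [Ring S] {J : Type u} [AddCommGroup J] [Module S J] [Module.Injective S J]

theorem exists_apply_ne_zero (hJ : IsCogenerator S J) {N : Type u} [AddCommGroup N]
    [Module S N] {y : N} (hy : y ≠ 0) : ∃ f : N →ₗ[S] J, f y ≠ 0 := by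
  by_contra! hker
  set K : Submodule S N := ⨅ f : N →ₗ[S] J, LinearMap.ker f
  have hyK : y ∈ K := Submodule.mem_iInf _ |>.mpr hker
  -- every map `K → J` extends to `N`, hence vanishes on `K`
  have hK : Subsingleton K := hJ K fun g => by
    obtain ⟨h, rfl⟩ :=
      Module.Injective.extension_property S J K N K.subtype K.injective_subtype g
    ext ⟨x, hx⟩
    exact (Submodule.mem_iInf _).mp hx h
  exact hy congr(Subtype.val $(Subsingleton.elim (⟨y, hyK⟩ : K) 0))

theorem injective_pi_self (hJ : IsCogenerator S J) (N : Type u) [AddCommGroup N]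
    [Module S N] : Function.Injective (LinearMap.pi fun f : N →ₗ[S] J => f) := by
  refine (injective_iff_map_eq_zero _).mpr fun y hy => ?_
  by_contra hy0
  obtain ⟨f, hf⟩ := hJ.exists_apply_ne_zero hy0
  exact hf (congr_fun hy f)

theorem exists_endomorphism_apply_ne_zero (hJ : IsCogenerator S J) {ι M : Type u}
    [AddCommGroup M] [Module S M] (i : ι) (u : M →ₗ[S] (ι → J)) {x : ι → J}
    (hx : x ∉ LinearMap.range u) : ∃ g : Module.End S (ι → J), g ∘ₗ u = 0 ∧ g x ≠ 0 := by
  have hmk : (LinearMap.range u).mkQ x ≠ 0 := by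
    rwa [Submodule.mkQ_apply, Ne, Submodule.Quotient.mk_eq_zero]
  obtain ⟨f, hf⟩ := hJ.exists_apply_ne_zero hmk
  refine ⟨LinearMap.pi fun _ => f ∘ₗ (LinearMap.range u).mkQ, ?_, fun hg => hf ?_⟩
  · rw [LinearMap.pi_comp, LinearMap.comp_assoc, LinearMap.range_mkQ_comp,
      LinearMap.comp_zero]
    rfl
  · exact congr_fun hg i

end IsCogenerator

section Evaluation

variable {R : Type u} [Ring R] {P : Type u} {M : Type*} [AddCommGroup P] [Module Rᵐᵒᵖ P]
  [AddCommGroup M] [Module Rᵐᵒᵖ M]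

theorem endLinear_apply_comp (φ : (M →ₗ[Rᵐᵒᵖ] P) →ₗ[Module.End Rᵐᵒᵖ P] P)
    (g : Module.End Rᵐᵒᵖ P) (f : M →ₗ[Rᵐᵒᵖ] P) : φ (g ∘ₗ f) = g (φ f) :=
  φ.map_smul g f

theorem endLinear_apply_mem_range {u : M →ₗ[Rᵐᵒᵖ] P}
    (hsep : ∀ x ∉ LinearMap.range u, ∃ g : Module.End Rᵐᵒᵖ P, g ∘ₗ u = 0 ∧ g x ≠ 0)
    (φ : (M →ₗ[Rᵐᵒᵖ] P) →ₗ[Module.End Rᵐᵒᵖ P] P) : φ u ∈ LinearMap.range u := by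
  by_contra hx
  obtain ⟨g, hgu, hgx⟩ := hsep _ hx
  exact hgx (by rw [← endLinear_apply_comp, hgu, map_zero])

theorem eq_evalAt_of_apply_eq [Module.Injective Rᵐᵒᵖ P] {u : M →ₗ[Rᵐᵒᵖ] P}
    (hu : Function.Injective u) (φ : (M →ₗ[Rᵐᵒᵖ] P) →ₗ[Module.End Rᵐᵒᵖ P] P) {m : M}
    (hm : u m = φ u) : evalAt m = φ := by
  ext f
  obtain ⟨h, rfl⟩ := Module.Injective.extension_property Rᵐᵒᵖ P M P u hu f
  change h (u m) = φ (h ∘ₗ u)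
  rw [hm, endLinear_apply_comp]

theorem evalAt_bijective [Module.Injective Rᵐᵒᵖ P] {u : M →ₗ[Rᵐᵒᵖ] P}
    (hu : Function.Injective u)
    (hsep : ∀ x ∉ LinearMap.range u, ∃ g : Module.End Rᵐᵒᵖ P, g ∘ₗ u = 0 ∧ g x ≠ 0) :
    Function.Bijective (fun m : M => evalAt (R := R) (J := P) m) := by
  refine ⟨fun a b hab => hu (LinearMap.congr_fun hab u), fun φ => ?_⟩
  obtain ⟨m, hm⟩ := endLinear_apply_mem_range hsep φ
  exact ⟨m, eq_evalAt_of_apply_eq hu φ hm⟩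

end Evaluation

/-- if `J` is an injective cogenerator of right `R`-modules, then for every
right `R`-module `M` there is an index set `ι` such that, with `J' := J^ι` (the product)
and `E' := End_R(J')ᵒᵖ`, the evaluation map `ε_M : M → Hom_{E'}(Hom_R(M,J'), J')` is an
isomorphism (here: bijective). -/
theorem stmt12 {R : Type u} [Ring R] (J : Type u) [AddCommGroup J] [Module Rᵐᵒᵖ J]
    (hJinj : Module.Injective Rᵐᵒᵖ J)
    (hcogen : ∀ (M : Type u) [AddCommGroup M] [Module Rᵐᵒᵖ M],
      (∀ f : M →ₗ[Rᵐᵒᵖ] J, f = 0) → Subsingleton M)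
    (M : Type u) [AddCommGroup M] [Module Rᵐᵒᵖ M] :
    ∃ ι : Type u,
      Function.Bijective (fun m : M => evalAt (R := R) (J := ι → J) m) :=
  ⟨M →ₗ[Rᵐᵒᵖ] J, evalAt_bijective (IsCogenerator.injective_pi_self hcogen M)
    fun _ => IsCogenerator.exists_endomorphism_apply_ne_zero hcogen 0 _⟩
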